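/- Let a, b, t_1, t_2, … be commuting formal variables. Then in the ring of formal power series over ℤ one has the identity Σ_{p ≥ 0} Σ_{λ ⊢ 2p} #syd_DIII(λ;p,p) · a^p b^p t_λ = ∏_{k=1}^∞ (1 − a^{2k} b^{2k} t_{2k}^2)^{−2} · (1 − a^{2k−1} b^{2k−1} t_{2k−1}^2)^{−1}, where t_λ = t_1^{m_1} t_2^{m_2} ⋯ for λ = [1^{m_1} · 2^{m_2} ⋯] (m_i the multiplicity of i in λ), and #syd_DIII(λ;p,p) = 0 unless every part of λ has even multiplicity. Equivalently: for all p ≥ 0 and every partition λ of 2p, #syd_DIII(λ;p,p) equals the coefficient of a^p b^p t_λ in the infinite product. -/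

import Mathlib

open Finset

/-- A signed Young diagram of shape `lam` and signature `(p, q)`, encoded by the
function `f` sending each part length `i` to the number of rows of length `i`
whose leading sign is `+`. -/
structure SYD {n : ℕ} (lam : Nat.Partition n) (p q : ℕ) : Type where
  f : ℕ → ℕ
  le_mult : ∀ i, f i ≤ Multiset.count i lam.parts
  plus_eq : ∑ i ∈ lam.parts.toFinset,
      (f i * ((i + 1) / 2) + (Multiset.count i lam.parts - f i) * (i / 2)) = p
  minus_eq : ∑ i ∈ lam.parts.toFinset,
      (f i * (i / 2) + (Multiset.count i lam.parts - f i) * ((i + 1) / 2)) = q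

abbrev Var : Type := ℕ ⊕ Bool

noncomputable def va : MvPowerSeries Var ℤ := MvPowerSeries.X (Sum.inr true)
noncomputable def vb : MvPowerSeries Var ℤ := MvPowerSeries.X (Sum.inr false)
noncomputable def vt (i : ℕ) : MvPowerSeries Var ℤ := MvPowerSeries.X (Sum.inl i)

noncomputable def geomInv (φ : MvPowerSeries Var ℤ) : MvPowerSeries Var ℤ :=
  MvPowerSeries.invOfUnit (1 - φ) 1

noncomputable def degOf {n : ℕ} (lam : Nat.Partition n) (p q : ℕ) : Var →₀ ℕ :=
  Finsupp.single (Sum.inr true) p + Finsupp.single (Sum.inr false) q +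
    ∑ i ∈ lam.parts.toFinset, Finsupp.single (Sum.inl i) (Multiset.count i lam.parts)

/-!
A DIII diagram of shape `λ` and signature `(p, p)` exists only if every multiplicity `m(i)` is
even, and it is determined by the even numbers `m_T⁺(2k) ≤ m(2k)`: for odd `i` the value
`m_T⁺(i) = m(i)/2` is forced, and the signature `(p, p)` then holds automatically.
Each factor `(1 - a^j b^j t_j²)⁻¹` is a geometric series, so the coefficient of `a^p b^p t_λ`
counts the choices of one exponent per geometric factor that produce `t_λ`: for every `k` two
exponents with sum `m(2k)/2` (from the squared factor) and one exponent `m(2k-1)/2`, the degree in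
`a` and `b` being automatically `p`. Halving `m_T⁺(2k)` gives the first of the two exponents.
-/

theorem exists_eq_nsmul_iff_of_ne_zero {M : Type*} [AddCommMonoid M] [PartialOrder M]
    [CanonicallyOrderedAdd M] [Sub M] [OrderedSub M] [AddLeftReflectLE M] {e d : M}
    (hd : d ≠ 0) :
    (∃ n : ℕ, d = n • e) ↔ e ≤ d ∧ ∃ n : ℕ, d - e = n • e := by
  constructor
  · rintro ⟨_ | n, rfl⟩
    · exact absurd (zero_nsmul e) hd
    · rw [succ_nsmul]
      exact ⟨le_add_self, n, add_tsub_cancel_right _ _⟩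
  · rintro ⟨hed, n, hn⟩
    exact ⟨n + 1, by rw [succ_nsmul, ← hn, tsub_add_cancel_of_le hed]⟩

open Classical in
theorem card_filter_finsuppAntidiag_eq_natCard
    {ι σ : Type*} [DecidableEq ι] [DecidableEq σ] {s : Finset ι} {e : ι → σ →₀ ℕ}
    (he : ∀ x ∈ s, e x ≠ 0) (d : σ →₀ ℕ) :
    #{l ∈ s.finsuppAntidiag d | ∀ x ∈ s, ∃ n : ℕ, l x = n • e x} =
      Nat.card {n : ι → ℕ // (∀ x ∉ s, n x = 0) ∧ ∑ x ∈ s, n x • e x = d} := by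
  have nsmul_inj : ∀ x ∈ s, Function.Injective fun n : ℕ => n • e x := fun x hx n n' h => by
    obtain ⟨i, hi⟩ := Finsupp.ne_iff.1 (he x hx)
    exact Nat.eq_of_mul_eq_mul_right (Nat.pos_of_ne_zero hi) (DFunLike.congr_fun h i)
  rw [← Nat.card_eq_finsetCard]
  refine (Nat.card_congr (Equiv.ofBijective (fun n =>
    (⟨Finsupp.indicator s fun x _ => n.1 x • e x, ?_⟩ : {l // l ∈ _})) ⟨?_, ?_⟩)).symm
  · rw [Finset.mem_filter, Finset.mem_finsuppAntidiag]
    refine ⟨⟨?_, Finsupp.support_indicator_subset _ _⟩, fun x hx => ⟨n.1 x, ?_⟩⟩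
    · refine (Finset.sum_congr rfl fun x hx => ?_).trans n.2.2
      simp [Finsupp.indicator_apply, hx]
    · simp [Finsupp.indicator_apply, hx]
  · rintro ⟨n, hn⟩ ⟨n', hn'⟩ h
    ext x
    have hx := DFunLike.congr_fun (congrArg Subtype.val h) x
    by_cases hxs : x ∈ s
    · simp only [Finsupp.indicator_apply, hxs] at hx
      exact nsmul_inj x hxs (by simpa using hx)
    · exact (hn.1 x hxs).trans (hn'.1 x hxs).symm
  · rintro ⟨l, hl⟩
    rw [Finset.mem_filter, Finset.mem_finsuppAntidiag] at hl
    obtain ⟨⟨hsum, hsupp⟩, hmul⟩ := hl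
    choose! n hn using hmul
    refine ⟨⟨fun x => if x ∈ s then n x else 0, fun x hx => if_neg hx, ?_⟩, ?_⟩
    · rw [← hsum]
      exact Finset.sum_congr rfl fun x hx => by simp only [if_pos hx, hn x hx]
    · ext1
      ext1 x
      by_cases hx : x ∈ s
      · simp [Finsupp.indicator_apply, hx, hn x hx]
      · simp [Finsupp.indicator_apply, hx, Finsupp.notMem_support_iff.1 (mt (@hsupp x) hx)]

namespace MvPowerSeries

variable {σ R ι : Type*}

open Classical in
noncomputable def geomSeries [Semiring R] (e : σ →₀ ℕ) : MvPowerSeries σ R :=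
  fun d => if ∃ n : ℕ, d = n • e then 1 else 0

open Classical in
theorem coeff_geomSeries [Semiring R] (e d : σ →₀ ℕ) :
    coeff d (geomSeries e : MvPowerSeries σ R) = if ∃ n : ℕ, d = n • e then 1 else 0 :=
  rfl

theorem one_sub_monomial_mul_geomSeries [Ring R] {e : σ →₀ ℕ} (he : e ≠ 0) :
    (1 - monomial e (1 : R)) * geomSeries e = 1 := by
  classical
  ext d
  rw [sub_mul, one_mul, map_sub, coeff_monomial_mul, coeff_one, one_mul]
  by_cases hd : d = 0
  · subst hd
    rw [if_pos rfl, coeff_geomSeries, if_pos ⟨0, (zero_nsmul e).symm⟩,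
      if_neg fun h => he (le_zero_iff.1 h), sub_zero]
  · rw [if_neg hd, coeff_geomSeries, coeff_geomSeries, exists_eq_nsmul_iff_of_ne_zero hd]
    by_cases hed : e ≤ d <;> simp [hed]

theorem coeff_prod_geomSeries [CommSemiring R] {s : Finset ι} {e : ι → σ →₀ ℕ}
    (he : ∀ x ∈ s, e x ≠ 0) (d : σ →₀ ℕ) :
    coeff d (∏ x ∈ s, geomSeries (e x) : MvPowerSeries σ R) =
      Nat.card {n : ι → ℕ // (∀ x ∉ s, n x = 0) ∧ ∑ x ∈ s, n x • e x = d} := by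
  classical
  rw [coeff_prod, ← card_filter_finsuppAntidiag_eq_natCard he, Finset.natCast_card_filter]
  refine Finset.sum_congr rfl fun l _ => ?_
  simp only [coeff_geomSeries, Finset.prod_boole]

end MvPowerSeries

open MvPowerSeries

noncomputable def factorExp (j : ℕ) : Var →₀ ℕ :=
  Finsupp.single (Sum.inr true) j + Finsupp.single (Sum.inr false) j +
    Finsupp.single (Sum.inl j) 2

theorem factorExp_apply_inl (j i : ℕ) : factorExp j (Sum.inl i) = if j = i then 2 else 0 := by
  simp [factorExp, Finsupp.single_apply]

theorem factorExp_apply_inr (j : ℕ) (c : Bool) : factorExp j (Sum.inr c) = j := by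
  cases c <;> simp [factorExp]

theorem factorExp_ne_zero (j : ℕ) : factorExp j ≠ 0 :=
  Finsupp.ne_iff.2 ⟨Sum.inl j, by simp [factorExp_apply_inl]⟩

theorem va_pow_mul_vb_pow_mul_vt_sq (j : ℕ) :
    va ^ j * vb ^ j * vt j ^ 2 = monomial (factorExp j) 1 := by
  simp only [va, vb, vt, X_pow_eq, monomial_mul_monomial, factorExp, mul_one]

theorem geomInv_monomial {e : Var →₀ ℕ} (he : e ≠ 0) :
    geomInv (monomial e 1) = geomSeries e := by
  refine left_inv_eq_right_inv (a := 1 - monomial e 1) ?_ (one_sub_monomial_mul_geomSeries he)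
  refine invOfUnit_mul _ _ ?_
  rw [map_sub, map_one, ← coeff_zero_eq_constantCoeff_apply, coeff_monomial,
    if_neg he.symm, sub_zero, Units.val_one]

theorem degOf_apply_inl {n : ℕ} (lam : Nat.Partition n) (p q i : ℕ) :
    degOf lam p q (Sum.inl i) = lam.parts.count i := by
  classical
  simp only [degOf, Finsupp.add_apply, Finsupp.finsetSum_apply, Finsupp.single_apply,
    reduceCtorEq, if_false, Sum.inl.injEq, Finset.sum_ite_eq', Multiset.mem_toFinset, zero_add]
  split_ifs with h
  · rfl
  · exact (Multiset.count_eq_zero.2 h).symm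

theorem degOf_apply_inr {n : ℕ} (lam : Nat.Partition n) (p : ℕ) (c : Bool) :
    degOf lam p p (Sum.inr c) = p := by
  cases c <;> simp [degOf]

section FactorExpSums

variable {ι : Type*}

theorem sum_nsmul_factorExp_apply_inl (s : Finset ι) (j n : ι → ℕ) (i : ℕ) :
    (∑ x ∈ s, n x • factorExp (j x)) (Sum.inl i) = 2 * ∑ x ∈ s with j x = i, n x := by
  classical
  simp [Finsupp.finsetSum_apply, factorExp_apply_inl, Finset.sum_filter, Finset.mul_sum,
    mul_comm]

theorem sum_nsmul_factorExp_apply_inr (s : Finset ι) (j n : ι → ℕ) (c : Bool) :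
    (∑ x ∈ s, n x • factorExp (j x)) (Sum.inr c) = ∑ x ∈ s, n x * j x := by
  simp [Finsupp.finsetSum_apply, factorExp_apply_inr]

theorem sum_nsmul_factorExp_eq_degOf_iff {p : ℕ} (lam : Nat.Partition (2 * p))
    (s : Finset ι) (j n : ι → ℕ) :
    ∑ x ∈ s, n x • factorExp (j x) = degOf lam p p ↔
      ∀ i, 2 * ∑ x ∈ s with j x = i, n x = lam.parts.count i := by
  classical
  refine ⟨fun h i => by rw [← sum_nsmul_factorExp_apply_inl, h, degOf_apply_inl], fun h => ?_⟩
  ext (i | c)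
  · rw [sum_nsmul_factorExp_apply_inl, h, degOf_apply_inl]
  · rw [sum_nsmul_factorExp_apply_inr, degOf_apply_inr]
    set t := s.image j ∪ lam.parts.toFinset
    have : 2 * ∑ x ∈ s, n x * j x = 2 * p := by
      calc 2 * ∑ x ∈ s, n x * j x
          = ∑ i ∈ t, (2 * ∑ x ∈ s with j x = i, n x) * i := by
            rw [Finset.mul_sum, ← Finset.sum_fiberwise_of_maps_to (t := t) (g := j)
              fun x hx => Finset.mem_union_left _ (Finset.mem_image_of_mem j hx)]
            refine Finset.sum_congr rfl fun i _ => ?_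
            rw [mul_assoc, Finset.sum_mul, Finset.mul_sum]
            exact Finset.sum_congr rfl fun x hx => by rw [(Finset.mem_filter.1 hx).2]
        _ = ∑ i ∈ t, lam.parts.count i • i := by simp only [h, smul_eq_mul]
        _ = 2 * p := by
            rw [← Finset.sum_multiset_count_of_subset _ _ Finset.subset_union_right,
              lam.parts_sum]
    omega

end FactorExpSums

/-- The `k`-th factor of the product is split into three geometric series, indexed by `(k, 0)` and
`(k, 1)` (the squared factor) and `(k, 2)`; the series at `x` is `∑ₙ (a^j b^j t_j²)ⁿ` with
`j = factorIndex x`. -/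
def factorIndex (x : ℕ × Fin 3) : ℕ := ![2 * x.1, 2 * x.1, 2 * x.1 - 1] x.2

theorem prod_geomInv_eq_prod_geomSeries (N : ℕ) :
    ∏ k ∈ Finset.Icc 1 N,
        (geomInv (va ^ (2 * k) * vb ^ (2 * k) * vt (2 * k) ^ 2)) ^ 2 *
          geomInv (va ^ (2 * k - 1) * vb ^ (2 * k - 1) * vt (2 * k - 1) ^ 2) =
      ∏ x ∈ Finset.Icc 1 N ×ˢ Finset.univ, geomSeries (factorExp (factorIndex x)) := by
  rw [Finset.prod_product]
  refine Finset.prod_congr rfl fun k _ => ?_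
  simp only [va_pow_mul_vb_pow_mul_vt_sq, geomInv_monomial (factorExp_ne_zero _),
    Fin.prod_univ_three, factorIndex]
  simp [sq]

theorem sum_filter_factorIndex_eq_two_mul (N k : ℕ) (n : ℕ × Fin 3 → ℕ) :
    ∑ x ∈ Finset.Icc 1 N ×ˢ Finset.univ with factorIndex x = 2 * k, n x =
      if k ∈ Finset.Icc 1 N then n (k, 0) + n (k, 1) else 0 := by
  rw [Finset.sum_filter, Finset.sum_product,
    ← Finset.sum_ite_eq' _ k fun k' => n (k', 0) + n (k', 1)]
  refine Finset.sum_congr rfl fun k' hk' => ?_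
  have hk'₁ := (Finset.mem_Icc.1 hk').1
  simp only [Fin.sum_univ_three, factorIndex]
  by_cases hk : k' = k
  · subst hk
    simp [show 2 * k' - 1 ≠ 2 * k' by omega]
  · simp [show 2 * k' ≠ 2 * k by omega, show 2 * k' - 1 ≠ 2 * k by omega, hk]

theorem sum_filter_factorIndex_eq_two_mul_add_one (N k : ℕ) (n : ℕ × Fin 3 → ℕ) :
    ∑ x ∈ Finset.Icc 1 N ×ˢ Finset.univ with factorIndex x = 2 * k + 1, n x =
      if k + 1 ∈ Finset.Icc 1 N then n (k + 1, 2) else 0 := by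
  rw [Finset.sum_filter, Finset.sum_product,
    ← Finset.sum_ite_eq' _ (k + 1) fun k' => n (k', 2)]
  refine Finset.sum_congr rfl fun k' hk' => ?_
  have hk'₁ := (Finset.mem_Icc.1 hk').1
  simp only [Fin.sum_univ_three, factorIndex]
  by_cases hk : k' = k + 1
  · subst hk
    simp [show 2 * (k + 1) ≠ 2 * k + 1 by omega, show 2 * (k + 1) - 1 = 2 * k + 1 by omega]
  · simp [show 2 * k' ≠ 2 * k + 1 by omega, show 2 * k' - 1 ≠ 2 * k + 1 by omega, hk]

theorem two_mul_plus_boxes {c f : ℕ} (i : ℕ) (hf : f ≤ c) (hodd : Odd i → 2 * f = c) :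
    2 * (f * ((i + 1) / 2) + (c - f) * (i / 2)) = c * i := by
  rcases Nat.even_or_odd' i with ⟨k, rfl | rfl⟩
  · rw [show (2 * k + 1) / 2 = k by omega, show 2 * k / 2 = k by omega, ← add_mul,
      Nat.add_sub_cancel' hf]
    ring
  · have hc := hodd (odd_two_mul_add_one k)
    rw [show (2 * k + 1 + 1) / 2 = k + 1 by omega, show (2 * k + 1) / 2 = k by omega,
      show c - f = f by omega, ← hc]
    ring

section SignedYoungDiagram

variable {p : ℕ} (lam : Nat.Partition (2 * p))

theorem sum_plus_boxes_eq {f : ℕ → ℕ} (hf : ∀ i, f i ≤ lam.parts.count i)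
    (hodd : ∀ i, Odd i → 2 * f i = lam.parts.count i) :
    ∑ i ∈ lam.parts.toFinset,
      (f i * ((i + 1) / 2) + (lam.parts.count i - f i) * (i / 2)) = p := by
  have : 2 * ∑ i ∈ lam.parts.toFinset,
      (f i * ((i + 1) / 2) + (lam.parts.count i - f i) * (i / 2)) = 2 * p := by
    rw [Finset.mul_sum, Finset.sum_congr rfl fun i _ => two_mul_plus_boxes i (hf i) (hodd i)]
    simpa using (Finset.sum_multiset_count lam.parts).symm.trans lam.parts_sum
  omega

theorem sum_minus_boxes_eq {f : ℕ → ℕ} (hf : ∀ i, f i ≤ lam.parts.count i)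
    (hodd : ∀ i, Odd i → 2 * f i = lam.parts.count i) :
    ∑ i ∈ lam.parts.toFinset,
      (f i * (i / 2) + (lam.parts.count i - f i) * ((i + 1) / 2)) = p := by
  refine (Finset.sum_congr rfl fun i _ => ?_).trans (sum_plus_boxes_eq lam
    (f := fun i => lam.parts.count i - f i) (fun i => Nat.sub_le _ _)
    fun i hi => by have := hodd i hi; omega)
  rw [Nat.sub_sub_self (hf i), add_comm]

end SignedYoungDiagram

def IsDIIIPlusRows (m f : ℕ → ℕ) : Prop :=
  f ≤ m ∧ (∀ i, Odd i → 2 * f i = m i) ∧ ∀ i, Even i → Even (m i) ∧ Even (f i)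

def sydDIIIEquiv {p : ℕ} (lam : Nat.Partition (2 * p)) :
    {T : SYD lam p p // (∀ i, Odd i → 2 * T.f i = lam.parts.count i) ∧
        ∀ i, Even i → Even (lam.parts.count i) ∧ Even (T.f i)} ≃
      {f : ℕ → ℕ // IsDIIIPlusRows (lam.parts.count ·) f} where
  toFun T := ⟨T.1.f, T.1.le_mult, T.2⟩
  invFun f := ⟨⟨f.1, f.2.1, sum_plus_boxes_eq lam f.2.1 f.2.2.1,
    sum_minus_boxes_eq lam f.2.1 f.2.2.1⟩, f.2.2⟩
  left_inv _ := rfl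
  right_inv _ := rfl

section FactorExponents

variable {N : ℕ} {m : ℕ → ℕ}

def exponentsOfPlusRows (N : ℕ) (m f : ℕ → ℕ) (x : ℕ × Fin 3) : ℕ :=
  if x.1 ∈ Finset.Icc 1 N then
    ![f (2 * x.1) / 2, (m (2 * x.1) - f (2 * x.1)) / 2, m (2 * x.1 - 1) / 2] x.2
  else 0

def plusRowsOfExponents (m : ℕ → ℕ) (n : ℕ × Fin 3 → ℕ) (i : ℕ) : ℕ :=
  if Even i then 2 * n (i / 2, 0) else m i / 2

theorem two_mul_sum_filter_exponentsOfPlusRows (hm : ∀ i ∉ Finset.Icc 1 (2 * N), m i = 0)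
    {f : ℕ → ℕ} (hf : IsDIIIPlusRows m f) (i : ℕ) :
    2 * ∑ x ∈ Finset.Icc 1 N ×ˢ Finset.univ with factorIndex x = i,
      exponentsOfPlusRows N m f x = m i := by
  obtain ⟨hle, hodd, heven⟩ := hf
  obtain ⟨k, rfl | rfl⟩ := Nat.even_or_odd' i
  · rw [sum_filter_factorIndex_eq_two_mul]
    split_ifs with hk
    · obtain ⟨⟨a, ha⟩, ⟨b, hb⟩⟩ := heven (2 * k) (even_two_mul k)
      have : f (2 * k) ≤ m (2 * k) := hle (2 * k)
      simp only [exponentsOfPlusRows, hk, if_true, Matrix.cons_val_zero, Matrix.cons_val_one]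
      omega
    · rw [hm _ (by rw [Finset.mem_Icc] at hk ⊢; omega)]
  · rw [sum_filter_factorIndex_eq_two_mul_add_one]
    split_ifs with hk
    · have := hodd (2 * k + 1) (odd_two_mul_add_one k)
      simp only [exponentsOfPlusRows, hk, if_true, show 2 * (k + 1) - 1 = 2 * k + 1 by omega]
      simp only [Fin.isValue, Matrix.cons_val]
      omega
    · rw [hm _ (by rw [Finset.mem_Icc] at hk ⊢; omega)]

theorem plusRowsOfExponents_exponentsOfPlusRows (hm : ∀ i ∉ Finset.Icc 1 (2 * N), m i = 0)
    {f : ℕ → ℕ} (hf : IsDIIIPlusRows m f) :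
    plusRowsOfExponents m (exponentsOfPlusRows N m f) = f := by
  obtain ⟨hle, hodd, heven⟩ := hf
  funext i
  obtain ⟨k, rfl | rfl⟩ := Nat.even_or_odd' i
  · have : f (2 * k) ≤ m (2 * k) := hle (2 * k)
    obtain ⟨a, ha⟩ := (heven (2 * k) (even_two_mul k)).2
    simp only [plusRowsOfExponents, exponentsOfPlusRows, even_two_mul, if_true,
      Nat.mul_div_cancel_left k two_pos]
    split_ifs with hk
    · simp only [Matrix.cons_val_zero]
      omega
    · rw [hm _ (by rw [Finset.mem_Icc] at hk ⊢; omega)] at this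
      omega
  · have := hodd (2 * k + 1) (odd_two_mul_add_one k)
    simp only [plusRowsOfExponents, Nat.not_even_two_mul_add_one, if_false]
    omega

variable {n : ℕ × Fin 3 → ℕ} (hn₀ : ∀ x ∉ Finset.Icc 1 N ×ˢ Finset.univ, n x = 0)
  (hn : ∀ i, 2 * ∑ x ∈ Finset.Icc 1 N ×ˢ Finset.univ with factorIndex x = i, n x = m i)
include hn₀ hn

theorem isDIIIPlusRows_plusRowsOfExponents : IsDIIIPlusRows m (plusRowsOfExponents m n) := by
  have hm_even : ∀ i, Even (m i) := fun i => ⟨_, (hn i).symm.trans (two_mul _)⟩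
  refine ⟨fun i => ?_, fun i hi => ?_, fun i hi => ⟨hm_even i, ?_⟩⟩
  · obtain ⟨k, rfl | rfl⟩ := Nat.even_or_odd' i
    · have h := hn (2 * k)
      rw [sum_filter_factorIndex_eq_two_mul] at h
      simp only [plusRowsOfExponents, even_two_mul, if_true, Nat.mul_div_cancel_left k two_pos]
      split_ifs at h with hk
      · omega
      · rw [hn₀ (k, 0) (by simp [hk])]
        exact zero_le
    · simp only [plusRowsOfExponents, Nat.not_even_two_mul_add_one, if_false]
      exact Nat.div_le_self _ _
  · simp only [plusRowsOfExponents, Nat.not_even_iff_odd.2 hi, if_false]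
    exact Nat.mul_div_cancel' (even_iff_two_dvd.1 (hm_even i))
  · simp only [plusRowsOfExponents, hi, if_true]
    exact even_two_mul _

theorem exponentsOfPlusRows_plusRowsOfExponents :
    exponentsOfPlusRows N m (plusRowsOfExponents m n) = n := by
  funext ⟨k, c⟩
  simp only [exponentsOfPlusRows]
  split_ifs with hk
  · have h₀ := hn (2 * k)
    rw [sum_filter_factorIndex_eq_two_mul, if_pos hk] at h₀
    obtain ⟨k, rfl⟩ := Nat.exists_eq_add_of_le' (Finset.mem_Icc.1 hk).1
    have h₁ := hn (2 * k + 1)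
    rw [sum_filter_factorIndex_eq_two_mul_add_one, if_pos hk] at h₁
    fin_cases c <;>
      simp only [plusRowsOfExponents, even_two_mul, if_true, Nat.mul_div_cancel_left _ two_pos,
        show 2 * (k + 1) - 1 = 2 * k + 1 by omega, Fin.zero_eta, Fin.mk_one, Fin.reduceFinMk,
        Matrix.cons_val_zero, Matrix.cons_val_one, Matrix.cons_val] <;>
      omega
  · exact (hn₀ (k, c) (by simp [hk])).symm

end FactorExponents

def plusRowsEquivExponents (N : ℕ) {m : ℕ → ℕ}
    (hm : ∀ i ∉ Finset.Icc 1 (2 * N), m i = 0) :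
    {f : ℕ → ℕ // IsDIIIPlusRows m f} ≃
      {n : ℕ × Fin 3 → ℕ // (∀ x ∉ Finset.Icc 1 N ×ˢ Finset.univ, n x = 0) ∧
        ∀ i, 2 * ∑ x ∈ Finset.Icc 1 N ×ˢ Finset.univ with factorIndex x = i, n x = m i}
    where
  toFun f := ⟨exponentsOfPlusRows N m f, fun x hx => by simp_all [exponentsOfPlusRows],
    two_mul_sum_filter_exponentsOfPlusRows hm f.2⟩
  invFun n := ⟨plusRowsOfExponents m n, isDIIIPlusRows_plusRowsOfExponents n.2.1 n.2.2⟩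
  left_inv f := Subtype.ext (plusRowsOfExponents_exponentsOfPlusRows hm f.2)
  right_inv n := Subtype.ext (exponentsOfPlusRows_plusRowsOfExponents n.2.1 n.2.2)

theorem Nat.Partition.count_parts_eq_zero_of_notMem_Icc {n M : ℕ} (lam : Nat.Partition n)
    (hM : n ≤ M) {i : ℕ} (hi : i ∉ Finset.Icc 1 M) : lam.parts.count i = 0 :=
  Multiset.count_eq_zero.2 fun h => hi <| Finset.mem_Icc.2
    ⟨lam.parts_pos h, (Nat.Partition.le_of_mem_parts h).trans hM⟩

/-- Generating function for the number of signed Young diagrams of type DIII: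
`syd_DIII(λ;p,p)` consists of the `T ∈ syd(λ;p,p)` with `m_T⁺(i) = m(i)/2` for
every odd part length `i`, and `m(i)` and `m_T⁺(i)` even for every even part
length `i`. -/
theorem stmt4 (p : ℕ) (lam : Nat.Partition (2 * p)) (N : ℕ) (hN : 2 * p ≤ N) :
    (Nat.card {T : SYD lam p p //
        (∀ i, Odd i → 2 * T.f i = Multiset.count i lam.parts) ∧
          ∀ i, Even i → Even (Multiset.count i lam.parts) ∧ Even (T.f i)} : ℤ) =
      MvPowerSeries.coeff (R := ℤ) (degOf lam p p)
        (∏ k ∈ Finset.Icc 1 N,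
          (geomInv (va ^ (2 * k) * vb ^ (2 * k) * vt (2 * k) ^ 2)) ^ 2 *
            geomInv (va ^ (2 * k - 1) * vb ^ (2 * k - 1) * vt (2 * k - 1) ^ 2)) := by
  rw [prod_geomInv_eq_prod_geomSeries,
    coeff_prod_geomSeries fun x _ => factorExp_ne_zero (factorIndex x)]
  exact_mod_cast Nat.card_congr <| (sydDIIIEquiv lam).trans <|
    (plusRowsEquivExponents N fun _ => lam.count_parts_eq_zero_of_notMem_Icc (by omega)).trans <|
      Equiv.subtypeEquivRight fun n => and_congr_right fun _ =>
        (sum_nsmul_factorExp_eq_degOf_iff lam _ factorIndex n).symm
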